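/- arXiv:2412.10223 — 2 statements merged into one kernel-verified Lean document; each statement's English description precedes it below -/
import Mathlib

section
/- Fix a permutation π of V. Let p ∈ Fin n and let δ ∈ V be the vector with δ p = 1 and all other coordinates 0. Let a, b, c ∈ AddMonoidAlgebra ℝ V be such that every element of supp(a), supp(b), and supp(c) has p-th coordinate equal to 0, and suppose b ≠ 0. Suppose moreover there exist J₁, J₂ ∈ V with a + b * (the single generator δ with coefficient 1) = F̄_{J₁} and c = F̄_{J₂}. Then p ∈ nodes((a + b * δ) * c), i.e., there exists h ∈ supp((a + b * δ) * c) with h p = 1. -/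
/-! Evaluation at the characters `g ↦ (-1)^{g·y}` is an algebra homomorphism from the group
algebra to `ℝ`, and an element whose support avoids the node `p` has the same evaluation at
`y` and at `y + δ`. By Fourier inversion `F̄_J` evaluates to `±1` everywhere, so if `(a + b δ) c`
avoided `p`, cancelling the nonzero evaluations of `c` would make `a + b δ` invariant under
`y ↦ y + δ`. But this shift flips the sign of `δ`'s character, so the evaluation of `b` would
vanish at every `y`, and Fourier inversion again gives `b = 0`. -/

open Finset

/-- The sign (-1)^{u·v} ∈ ℝ. -/
noncomputable def sgn {n : ℕ} (u v : Fin n → ZMod 2) : ℝ :=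
  if (∑ i, u i * v i) = (1 : ZMod 2) then -1 else 1

/-- Fourier coefficient a^J_I, for a permutation π of V = Fin n → ZMod 2. -/
noncomputable def fc {n : ℕ} (π : Equiv.Perm (Fin n → ZMod 2))
    (J I : Fin n → ZMod 2) : ℝ :=
  (1 / 2 ^ n) * ∑ x : Fin n → ZMod 2, sgn I x * sgn (π x) J

/-- The group algebra element F̄_J ∈ AddMonoidAlgebra ℝ V whose coefficient at g is a^J_g. -/
noncomputable def Fbar {n : ℕ} (π : Equiv.Perm (Fin n → ZMod 2))
    (J : Fin n → ZMod 2) : AddMonoidAlgebra ℝ (Fin n → ZMod 2) :=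
  ∑ g : Fin n → ZMod 2, AddMonoidAlgebra.single g (fc π J g)

open Matrix

section Sign

variable {n : ℕ}

lemma sgn_eq_ite (u v : Fin n → ZMod 2) : sgn u v = if u ⬝ᵥ v = 1 then -1 else 1 := rfl

lemma sgn_ne_zero (u v : Fin n → ZMod 2) : sgn u v ≠ 0 := by
  rw [sgn_eq_ite]; split_ifs <;> norm_num

lemma sgn_comm (u v : Fin n → ZMod 2) : sgn u v = sgn v u := by
  rw [sgn_eq_ite, sgn_eq_ite, dotProduct_comm]

lemma zmod_two_sign_add (s t : ZMod 2) :
    (if s + t = 1 then (-1 : ℝ) else 1) =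
      (if s = 1 then -1 else 1) * (if t = 1 then -1 else 1) := by
  have key : s + t = 1 ↔ ¬(s = 1 ↔ t = 1) := by revert s t; decide
  simp only [key]; split_ifs <;> simp_all

lemma sgn_add_left (u v x : Fin n → ZMod 2) : sgn (u + v) x = sgn u x * sgn v x := by
  simp only [sgn_eq_ite, add_dotProduct, zmod_two_sign_add]

lemma sgn_add_right (u x y : Fin n → ZMod 2) : sgn u (x + y) = sgn u x * sgn u y := by
  simp only [sgn_comm u, sgn_add_left]

lemma sgn_single_left (p : Fin n) (v : Fin n → ZMod 2) :
    sgn (Pi.single p 1) v = if v p = 1 then -1 else 1 := by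
  rw [sgn_eq_ite, single_dotProduct, one_mul]

noncomputable def sgnChar (z : Fin n → ZMod 2) : AddChar (Fin n → ZMod 2) ℝ where
  toFun g := sgn g z
  map_zero_eq_one' := by simp [sgn_eq_ite]
  map_add_eq_mul' u v := sgn_add_left u v z

lemma sgnChar_apply (z g : Fin n → ZMod 2) : sgnChar z g = sgn g z := rfl

lemma sgnChar_eq_zero_iff (z : Fin n → ZMod 2) : sgnChar z = 0 ↔ z = 0 := by
  refine ⟨fun h => ?_, fun h => ?_⟩
  · by_contra hz
    obtain ⟨q, hq⟩ : ∃ q, z q ≠ 0 := Function.ne_iff.1 hz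
    have hzq : z q = 1 := by revert hq; generalize z q = t; revert t; decide
    have := DFunLike.congr_fun h (Pi.single q 1)
    rw [sgnChar_apply, sgn_single_left, hzq, AddChar.zero_apply] at this
    norm_num at this
  · ext g
    simp [sgnChar_apply, sgn_eq_ite, h]

lemma sum_sgn_left (z : Fin n → ZMod 2) :
    ∑ g, sgn g z = if z = 0 then (2 : ℝ) ^ n else 0 := by
  classical
  simp_rw [← sgnChar_apply, AddChar.sum_eq_ite, sgnChar_eq_zero_iff]
  simp

lemma sum_sgn_mul_sgn (x y : Fin n → ZMod 2) :
    ∑ g, sgn g x * sgn g y = if x = y then (2 : ℝ) ^ n else 0 := by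
  simp_rw [← sgn_add_right, sum_sgn_left, ← ZModModule.sub_eq_add, sub_eq_zero]

end Sign

section FourierEval

variable {n : ℕ}

noncomputable def fourierEval (y : Fin n → ZMod 2) :
    AddMonoidAlgebra ℝ (Fin n → ZMod 2) →ₐ[ℝ] ℝ :=
  AddMonoidAlgebra.lift ℝ ℝ (Fin n → ZMod 2) (sgnChar y).toMonoidHom

lemma fourierEval_apply (y : Fin n → ZMod 2) (f : AddMonoidAlgebra ℝ (Fin n → ZMod 2)) :
    fourierEval y f = ∑ g, f.coeff g * sgn g y := by
  rw [fourierEval, AddMonoidAlgebra.lift_apply, Finsupp.sum_fintype _ _ (by simp)]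
  rfl

lemma fourierEval_single (y g : Fin n → ZMod 2) (r : ℝ) :
    fourierEval y (AddMonoidAlgebra.single g r) = r * sgn g y := by
  simp [fourierEval, sgnChar_apply]

lemma fourierEval_Fbar (π : Equiv.Perm (Fin n → ZMod 2)) (K y : Fin n → ZMod 2) :
    fourierEval y (Fbar π K) = sgn (π y) K := by
  have h2n : (2 : ℝ) ^ n ≠ 0 := by positivity
  calc fourierEval y (Fbar π K)
      = ∑ g, (1 / 2 ^ n * ∑ x, sgn g x * sgn (π x) K) * sgn g y := by
        simp only [Fbar, map_sum, fourierEval_single, fc]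
    _ = 1 / 2 ^ n * ∑ x, (∑ g, sgn g x * sgn g y) * sgn (π x) K := by
        simp only [Finset.mul_sum, Finset.sum_mul]
        rw [Finset.sum_comm]
        exact Finset.sum_congr rfl fun x _ => Finset.sum_congr rfl fun g _ => by ring
    _ = sgn (π y) K := by
        simp [sum_sgn_mul_sgn, h2n]

lemma sum_sgn_mul_fourierEval (f : AddMonoidAlgebra ℝ (Fin n → ZMod 2)) (g : Fin n → ZMod 2) :
    ∑ y, sgn g y * fourierEval y f = 2 ^ n * f.coeff g := by
  calc ∑ y, sgn g y * fourierEval y f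
      = ∑ h, f.coeff h * ∑ y, sgn y g * sgn y h := by
        simp only [fourierEval_apply, Finset.mul_sum]
        rw [Finset.sum_comm]
        exact Finset.sum_congr rfl fun h _ => Finset.sum_congr rfl fun y _ => by
          rw [sgn_comm g, sgn_comm h]; ring
    _ = 2 ^ n * f.coeff g := by
        simp [sum_sgn_mul_sgn, mul_comm]

lemma exists_fourierEval_ne_zero {f : AddMonoidAlgebra ℝ (Fin n → ZMod 2)} (hf : f ≠ 0) :
    ∃ y, fourierEval y f ≠ 0 := by
  by_contra! h
  refine hf ?_
  ext g
  simpa [h] using (sum_sgn_mul_fourierEval f g).symm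

lemma fourierEval_add_single_of_forall_ne_one (p : Fin n)
    {f : AddMonoidAlgebra ℝ (Fin n → ZMod 2)} (hf : ∀ g ∈ f.coeff.support, g p ≠ 1)
    (y : Fin n → ZMod 2) :
    fourierEval (y + Pi.single p 1) f = fourierEval y f := by
  simp only [fourierEval_apply, sgn_add_right]
  refine Finset.sum_congr rfl fun g _ => ?_
  by_cases hg : f.coeff g = 0
  · simp [hg]
  · rw [sgn_comm g (Pi.single p 1), sgn_single_left,
      if_neg (hf g (Finsupp.mem_support_iff.2 hg)), mul_one]

end FourierEval

theorem node_of_product_general {n : ℕ} (π : Equiv.Perm (Fin n → ZMod 2))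
    (p : Fin n) (δ : Fin n → ZMod 2) (hδ : δ = fun i => if i = p then 1 else 0)
    (a b c : AddMonoidAlgebra ℝ (Fin n → ZMod 2))
    (ha : ∀ g ∈ a.coeff.support, g p = 0)
    (hb : ∀ g ∈ b.coeff.support, g p = 0)
    (hc : ∀ g ∈ c.coeff.support, g p = 0)
    (hbne : b ≠ 0)
    (hcc : ∃ J₂ : Fin n → ZMod 2, c = Fbar π J₂) :
    ∃ h ∈ ((a + b * AddMonoidAlgebra.single δ (1 : ℝ)) * c).coeff.support, h p = 1 := by
  obtain ⟨J₂, hJ₂⟩ := hcc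
  obtain rfl : δ = Pi.single p 1 := hδ.trans (funext fun i => (Pi.single_apply p 1 i).symm)
  set L := a + b * AddMonoidAlgebra.single (Pi.single p 1) (1 : ℝ)
  by_contra! hLc
  obtain ⟨y, hy⟩ := exists_fourierEval_ne_zero hbne
  have shift {f : AddMonoidAlgebra ℝ (Fin n → ZMod 2)} (hf : ∀ g ∈ f.coeff.support, g p = 0) :
      fourierEval (y + Pi.single p 1) f = fourierEval y f :=
    fourierEval_add_single_of_forall_ne_one p (fun g hg => by simp [hf g hg]) y
  have hL : fourierEval (y + Pi.single p 1) L = fourierEval y L := by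
    have hc0 : fourierEval y c ≠ 0 := by rw [hJ₂, fourierEval_Fbar]; exact sgn_ne_zero _ _
    have h := fourierEval_add_single_of_forall_ne_one p hLc y
    rwa [map_mul, map_mul, shift hc, mul_left_inj' hc0] at h
  have hL_eval (z : Fin n → ZMod 2) :
      fourierEval z L = fourierEval z a + fourierEval z b * sgn (Pi.single p 1) z := by
    rw [map_add, map_mul, fourierEval_single, one_mul]
  have hflip : sgn (Pi.single p 1) (y + Pi.single p 1) = - sgn (Pi.single p 1) y := by
    rw [sgn_add_right, sgn_single_left (v := Pi.single p 1)]
    simp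
  rw [hL_eval, hL_eval, shift ha, shift hb, hflip] at hL
  exact mul_ne_zero hy (sgn_ne_zero (Pi.single p 1) y) (by linarith)

/-- If a + b·δ and c are both images of J ↦ F̄_J, where a, b, c avoid the node p and
b ≠ 0, then the product (a + b·δ)·c uses the node p. -/
theorem node_of_product {n : ℕ} (hn : 1 ≤ n) (π : Equiv.Perm (Fin n → ZMod 2))
    (p : Fin n) (δ : Fin n → ZMod 2) (hδ : δ = fun i => if i = p then 1 else 0)
    (a b c : AddMonoidAlgebra ℝ (Fin n → ZMod 2))
    (ha : ∀ g ∈ a.coeff.support, g p = 0)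
    (hb : ∀ g ∈ b.coeff.support, g p = 0)
    (hc : ∀ g ∈ c.coeff.support, g p = 0)
    (hbne : b ≠ 0)
    (hab : ∃ J₁ : Fin n → ZMod 2,
      a + b * AddMonoidAlgebra.single δ (1 : ℝ) = Fbar π J₁)
    (hcc : ∃ J₂ : Fin n → ZMod 2, c = Fbar π J₂) :
    ∃ h ∈ ((a + b * AddMonoidAlgebra.single δ (1 : ℝ)) * c).coeff.support, h p = 1 :=
  node_of_product_general π p δ hδ a b c ha hb hc hbne hcc
end

section
/- Fix a permutation π of V and an integer m ≥ 1. Let S be a subgroup of V such that for every J ∈ S and every I ∈ V with Hamming weight |I| > m, a^J_I = 0. Then the total set of nodes used by S is bounded by a function of m alone: the cardinality of ⋃_{J ∈ S} {i ∈ Fin n : ∃ g ∈ V, a^J_g ≠ 0 ∧ g i = 1} is at most (m·2^{2m−2})³. -/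
/-!
Put `f_J x = (-1)^{J·π(x)}`, so that `a^J_I` is the `I`-th Walsh coefficient of `f_J` and the
hypothesis says that `f_J` has degree at most `m`. For a `±1`-valued `f`, the sum of the
coefficients at `g + U`, `U` supported off `supp g`, is a coefficient of the restriction of `f` to
the subcube on `supp g`, hence lies in `2^{1-|g|}ℤ` (in `ℤ` if `g = 0`). Downward induction on `|g|`
puts every coefficient of `f_J` in `2^{1-m}ℤ`, and Parseval then leaves room for at most `4^{m-1}`
nonzero ones, so `f_J` uses at most `D = m·4^{m-1}` nodes.

Since `f_{J+J'} = f_J f_{J'}`, every node used by `S` is used by some `J_k` of a basis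
`J_1, …, J_r` of `S`, so the set `N` of these nodes has at most `rD` elements. The `2^r` functions
`f_J`, `J ∈ S`, are linearly independent and lie in the span of the characters `(-1)^{g·x}` with
`supp g ⊆ N` and `|g| ≤ m`, of which there are at most `(|N|+1)^m`. Thus `2^r ≤ (rD+1)^m`, which
forces `r ≤ D²`, and `|N| ≤ rD ≤ D³`.
-/

open Finset

/-- Hamming weight of an n-bit vector. -/
def wt {n : ℕ} (v : Fin n → ZMod 2) : ℕ :=
  (Finset.univ.filter (fun i => v i = 1)).card

lemma ZMod.eq_zero_or_eq_one (a : ZMod 2) : a = 0 ∨ a = 1 := by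
  revert a; decide

lemma ZMod.eq_one_or_eq_one_of_add_eq_one {a b : ZMod 2} (h : a + b = 1) : a = 1 ∨ b = 1 := by
  revert a b; decide

theorem AddChar.map_sum_eq_prod {A M ι : Type*} [AddCommMonoid A] [CommMonoid M]
    (ψ : AddChar A M) (s : Finset ι) (f : ι → A) : ψ (∑ i ∈ s, f i) = ∏ i ∈ s, ψ (f i) := by
  induction s using Finset.cons_induction with
  | empty => simp
  | cons a s ha ih => simp [sum_cons, prod_cons, AddChar.map_add_eq_mul, ih]

theorem AddSubgroup.exists_card_eq_two_pow_of_zmod_two {G : Type*} [AddCommGroup G]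
    [Module (ZMod 2) G] [Finite G] (S : AddSubgroup G) :
    ∃ (r : ℕ) (b : Fin r → G), Nat.card S = 2 ^ r ∧ (∀ k, b k ∈ S) ∧
      ∀ J ∈ S, ∃ c : Fin r → ZMod 2, ∑ k, c k • b k = J := by
  let S' := AddSubgroup.toZModSubmodule 2 S
  have : Fintype S' := Fintype.ofFinite _
  let b := Module.finBasis (ZMod 2) S'
  refine ⟨_, fun k => b k, ?_, fun k => (b k).2, fun J hJ => ⟨b.repr ⟨J, hJ⟩, ?_⟩⟩
  · rw [show Nat.card S = Nat.card S' from rfl, Nat.card_eq_fintype_card,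
      Module.card_eq_pow_finrank (K := ZMod 2), ZMod.card]
  · simpa only [AddSubmonoidClass.coe_finsetSum, SetLike.val_smul]
      using congrArg Subtype.val (b.sum_repr ⟨J, hJ⟩)

lemma Finset.exists_sum_eq_two_mul_add_card {α : Type*} (s : Finset α) {e : α → ℝ}
    (he : ∀ a ∈ s, e a = 1 ∨ e a = -1) : ∃ k : ℤ, ∑ a ∈ s, e a = 2 * k + #s := by
  induction s using Finset.cons_induction with
  | empty => exact ⟨0, by simp⟩
  | cons a s ha ih =>
    obtain ⟨k, hk⟩ := ih fun b hb => he b (mem_cons_of_mem hb)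
    rw [sum_cons, hk, card_cons]
    rcases he a (mem_cons_self a s) with h | h
    · exact ⟨k, by rw [h]; push_cast; ring⟩
    · exact ⟨k - 1, by rw [h]; push_cast; ring⟩

lemma inv_two_pow_mem_zmultiples {a b : ℕ} (h : a ≤ b) :
    ((2 : ℝ) ^ a)⁻¹ ∈ AddSubgroup.zmultiples ((2 : ℝ) ^ b)⁻¹ := by
  refine AddSubgroup.mem_zmultiples_iff.mpr ⟨2 ^ (b - a), ?_⟩
  rw [zsmul_eq_mul, Int.cast_pow, Int.cast_two, ← Nat.sub_add_cancel h, pow_add,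
    Nat.add_sub_cancel]
  field_simp

lemma le_abs_of_mem_zmultiples {c a : ℝ} (hc : 0 ≤ c) (ha : a ∈ AddSubgroup.zmultiples c)
    (ha0 : a ≠ 0) : c ≤ |a| := by
  obtain ⟨k, rfl⟩ := AddSubgroup.mem_zmultiples_iff.mp ha
  have hk : k ≠ 0 := by
    rintro rfl
    simp at ha0
  rw [zsmul_eq_mul, abs_mul, abs_of_nonneg hc]
  exact le_mul_of_one_le_left hc (by exact_mod_cast Int.one_le_abs hk)

lemma Nat.sum_choose_le_succ_pow (t m : ℕ) : ∑ k ∈ range (m + 1), t.choose k ≤ (t + 1) ^ m := by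
  rw [add_pow]
  refine sum_le_sum fun k hk => ?_
  rw [one_pow, mul_one]
  exact (Nat.choose_le_pow t k).trans
    (Nat.le_mul_of_pos_right _ (Nat.choose_pos (Nat.lt_succ_iff.mp (mem_range.mp hk))))

lemma Nat.succ_pow_mul_le {m r : ℕ} (h : 2 * m ≤ r) : (r + 1) ^ m * r ≤ (r + 2 * m) * r ^ m := by
  induction m with
  | zero => simp
  | succ m ih =>
    calc (r + 1) ^ (m + 1) * r = (r + 1) ^ m * r * (r + 1) := by ring
      _ ≤ (r + 2 * m) * r ^ m * (r + 1) := Nat.mul_le_mul_right _ (ih (by omega))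
      _ = (r + 2 * m) * (r + 1) * r ^ m := by ring
      _ ≤ (r + 2 * (m + 1)) * r * r ^ m := Nat.mul_le_mul_right _ (by nlinarith)
      _ = (r + 2 * (m + 1)) * r ^ (m + 1) := by ring

lemma Nat.succ_pow_le_two_mul_pow {m r : ℕ} (h : 2 * m ≤ r) : (r + 1) ^ m ≤ 2 * r ^ m := by
  rcases Nat.eq_zero_or_pos r with rfl | hr
  · obtain rfl : m = 0 := by omega
    simp
  refine Nat.le_of_mul_le_mul_right ?_ hr
  calc (r + 1) ^ m * r ≤ (r + 2 * m) * r ^ m := Nat.succ_pow_mul_le h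
    _ ≤ 2 * r * r ^ m := Nat.mul_le_mul_right _ (by omega)
    _ = 2 * r ^ m * r := by ring

lemma Nat.succ_mul_add_one_pow_le {m r : ℕ} (D : ℕ) (h : 2 * m ≤ r) :
    ((r + 1) * D + 1) ^ m ≤ 2 * (r * D + 1) ^ m := by
  rcases Nat.eq_zero_or_pos r with rfl | hr
  · obtain rfl : m = 0 := by omega
    simp
  refine Nat.le_of_mul_le_mul_right ?_ (pow_pos hr m)
  calc ((r + 1) * D + 1) ^ m * r ^ m = (((r + 1) * D + 1) * r) ^ m := (mul_pow _ _ _).symm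
    _ ≤ ((r * D + 1) * (r + 1)) ^ m := Nat.pow_le_pow_left (by nlinarith) m
    _ = (r * D + 1) ^ m * (r + 1) ^ m := mul_pow _ _ _
    _ ≤ (r * D + 1) ^ m * (2 * r ^ m) := Nat.mul_le_mul_left _ (Nat.succ_pow_le_two_mul_pow h)
    _ = 2 * (r * D + 1) ^ m * r ^ m := by ring

namespace SubgroupNodes

def signChar : AddChar (ZMod 2) ℝ where
  toFun a := if a = 1 then -1 else 1
  map_zero_eq_one' := by simp
  map_add_eq_mul' a b := by
    rcases ZMod.eq_zero_or_eq_one a with rfl | rfl <;>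
      rcases ZMod.eq_zero_or_eq_one b with rfl | rfl <;> simp [show (1 + 1 : ZMod 2) = 0 from rfl]

lemma sum_signChar_mul (c : ZMod 2) : ∑ a : ZMod 2, signChar (a * c) = if c = 0 then 2 else 0 := by
  rw [show (univ : Finset (ZMod 2)) = {0, 1} from rfl, sum_pair zero_ne_one]
  rcases ZMod.eq_zero_or_eq_one c with rfl | rfl <;> norm_num [signChar]

variable {n : ℕ}

local notation "𝔽" => Fin n → ZMod 2

lemma sgn_eq_signChar (u v : 𝔽) : sgn u v = signChar (∑ i, u i * v i) := rfl

lemma sgn_eq_prod (u v : 𝔽) : sgn u v = ∏ i, signChar (u i * v i) := by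
  rw [sgn_eq_signChar, AddChar.map_sum_eq_prod]

lemma sgn_comm (u v : 𝔽) : sgn u v = sgn v u := by
  simp only [sgn_eq_signChar, mul_comm]

lemma sgn_add_left (u v w : 𝔽) : sgn (u + v) w = sgn u w * sgn v w := by
  simp only [sgn_eq_signChar, Pi.add_apply, add_mul, sum_add_distrib, AddChar.map_add_eq_mul]

lemma sgn_add_right (u v w : 𝔽) : sgn u (v + w) = sgn u v * sgn u w := by
  rw [sgn_comm, sgn_add_left, sgn_comm v, sgn_comm w]

lemma sgn_zero_left (v : 𝔽) : sgn 0 v = 1 := by simp [sgn_eq_signChar]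

lemma sgn_zero_right (u : 𝔽) : sgn u 0 = 1 := by simp [sgn_eq_signChar]

lemma sgn_eq_one_or_neg_one (u v : 𝔽) : sgn u v = 1 ∨ sgn u v = -1 := by
  unfold sgn; split_ifs <;> simp

lemma sgn_mul_self (u v : 𝔽) : sgn u v * sgn u v = 1 := by
  rcases sgn_eq_one_or_neg_one u v with h | h <;> simp [h]

def subcube (T : Finset (Fin n)) : Finset 𝔽 :=
  Fintype.piFinset fun i => if i ∈ T then univ else {0}

lemma mem_subcube {T : Finset (Fin n)} {U : 𝔽} : U ∈ subcube T ↔ ∀ i ∉ T, U i = 0 := by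
  simp only [subcube, Fintype.mem_piFinset]
  refine forall_congr' fun i => ?_
  split_ifs <;> simp [*]

lemma zero_mem_subcube (T : Finset (Fin n)) : (0 : 𝔽) ∈ subcube T :=
  mem_subcube.mpr fun _ _ => rfl

lemma card_subcube (T : Finset (Fin n)) : #(subcube T) = 2 ^ #T := by
  simp [subcube, Fintype.card_piFinset, apply_ite, prod_ite_mem]

lemma sum_sgn_subcube (T : Finset (Fin n)) (x : 𝔽) :
    ∑ U ∈ subcube T, sgn U x = if ∀ i ∈ T, x i = 0 then 2 ^ #T else 0 := by
  simp only [subcube, sgn_eq_prod]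
  rw [← prod_univ_sum (fun i => if i ∈ T then univ else {0}) fun i a => signChar (a * x i)]
  have (i : Fin n) : ∑ a ∈ (if i ∈ T then univ else {0}), signChar (a * x i)
      = if i ∈ T then (if x i = 0 then 2 else 0) else 1 := by
    split_ifs <;> simp_all [sum_signChar_mul]
  simp only [this, prod_ite_mem, univ_inter, prod_ite_zero, prod_const]

lemma sum_sgn (x : 𝔽) : ∑ U, sgn U x = if x = 0 then 2 ^ n else 0 := by
  have h := sum_sgn_subcube univ x
  simp only [mem_univ, forall_const, card_univ, Fintype.card_fin] at h
  rw [show subcube (univ : Finset (Fin n)) = univ by ext; simp [mem_subcube]] at h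
  rw [h]
  split_ifs <;> simp_all [funext_iff]

noncomputable def walsh (f : 𝔽 → ℝ) (g : 𝔽) : ℝ := (1 / 2 ^ n) * ∑ x, sgn g x * f x

lemma sum_sgn_mul_sgn (y x : 𝔽) : ∑ g : 𝔽, sgn g y * sgn g x = if y = x then 2 ^ n else 0 := by
  simp only [← sgn_add_right, sum_sgn, ← ZModModule.sub_eq_add, sub_eq_zero]

lemma sum_walsh_mul_sgn (f : 𝔽 → ℝ) (x : 𝔽) : ∑ g, walsh f g * sgn g x = f x := by
  calc ∑ g, walsh f g * sgn g x = (1 / 2 ^ n) * ∑ y, f y * ∑ g, sgn g y * sgn g x := by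
        simp only [walsh, mul_sum, sum_mul]
        rw [sum_comm]
        exact sum_congr rfl fun y _ => sum_congr rfl fun g _ => by ring
    _ = f x := by
        simp only [sum_sgn_mul_sgn, mul_ite, mul_zero, sum_ite_eq', mem_univ, if_true]
        field_simp

lemma walsh_mul (f h : 𝔽 → ℝ) (g : 𝔽) :
    walsh (f * h) g = ∑ k, walsh h k * walsh f (g + k) := by
  calc walsh (f * h) g = (1 / 2 ^ n) * ∑ x, sgn g x * f x * ∑ k, walsh h k * sgn k x := by
        rw [walsh]
        simp only [Pi.mul_apply, sum_walsh_mul_sgn, mul_assoc]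
    _ = ∑ k, walsh h k * walsh f (g + k) := by
        simp only [walsh, mul_sum, sgn_add_left]
        rw [sum_comm]
        exact sum_congr rfl fun k _ => sum_congr rfl fun x _ => by ring

lemma sum_walsh_sq (f : 𝔽 → ℝ) : ∑ g, walsh f g ^ 2 = (∑ x, f x ^ 2) / 2 ^ n := by
  calc ∑ g, walsh f g ^ 2 = ∑ g, walsh f g * ((1 / 2 ^ n) * ∑ x, sgn g x * f x) := by
        simp only [sq]; rfl
    _ = (1 / 2 ^ n) * ∑ x, (∑ g, walsh f g * sgn g x) * f x := by
        simp only [mul_sum, sum_mul]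
        rw [sum_comm]
        exact sum_congr rfl fun x _ => sum_congr rfl fun g _ => by ring
    _ = (∑ x, f x ^ 2) / 2 ^ n := by simp [sum_walsh_mul_sgn, sq, div_eq_inv_mul]

lemma sum_walsh_add_subcube (f : 𝔽 → ℝ) (g : 𝔽) (T : Finset (Fin n)) :
    ∑ U ∈ subcube Tᶜ, walsh f (g + U) = (∑ z ∈ subcube T, sgn g z * f z) / 2 ^ #T := by
  have hT : #T ≤ n := by simpa using card_le_univ T
  have hpow : (2 : ℝ) ^ n = 2 ^ #T * 2 ^ #Tᶜ := by
    rw [← pow_add, card_compl, Fintype.card_fin, Nat.add_sub_cancel' hT]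
  calc ∑ U ∈ subcube Tᶜ, walsh f (g + U)
      = (1 / 2 ^ n) * ∑ z, sgn g z * f z * ∑ U ∈ subcube Tᶜ, sgn U z := by
        simp only [walsh, mul_sum, sgn_add_left]
        rw [sum_comm]
        exact sum_congr rfl fun x _ => sum_congr rfl fun U _ => by ring
    _ = (∑ z ∈ subcube T, sgn g z * f z) / 2 ^ #T := by
        simp only [sum_sgn_subcube, mem_compl, ← mem_subcube, mul_ite, mul_zero, ← sum_filter,
          ← sum_mul, filter_univ_mem, hpow]
        field_simp

def supp (v : 𝔽) : Finset (Fin n) := univ.filter (v · = 1)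

lemma mem_supp {v : 𝔽} {i : Fin n} : i ∈ supp v ↔ v i = 1 := by simp [supp]

lemma wt_eq_card_supp (v : 𝔽) : wt v = #(supp v) := rfl

lemma wt_le (v : 𝔽) : wt v ≤ n := (card_le_univ _).trans_eq (Fintype.card_fin n)

lemma supp_injective : Function.Injective (supp : 𝔽 → Finset (Fin n)) := by
  intro u v h
  funext i
  have hi : u i = 1 ↔ v i = 1 := by rw [← mem_supp, ← mem_supp, h]
  rcases ZMod.eq_zero_or_eq_one (u i) with hu | hu <;>
    rcases ZMod.eq_zero_or_eq_one (v i) with hv | hv <;> simp_all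

lemma wt_lt_wt_add {g U : 𝔽} (hU : U ∈ subcube (supp g)ᶜ) (hU0 : U ≠ 0) :
    wt g < wt (g + U) := by
  simp only [mem_subcube, mem_compl, not_not, mem_supp] at hU
  obtain ⟨i, hi⟩ : ∃ i, U i ≠ 0 := by
    by_contra! h
    exact hU0 (funext h)
  have hgi : g i = 0 := (ZMod.eq_zero_or_eq_one _).resolve_right fun h => hi (hU i h)
  have hUi : U i = 1 := (ZMod.eq_zero_or_eq_one _).resolve_left hi
  rw [wt_eq_card_supp, wt_eq_card_supp]
  refine card_lt_card ((ssubset_iff_of_subset fun j hj => ?_).mpr ⟨i, ?_, ?_⟩)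
  · rw [mem_supp] at hj ⊢
    simp [hj, hU j hj]
  · simp [mem_supp, hgi, hUi]
  · simp [mem_supp, hgi]

lemma sum_walsh_add_subcube_mem {f : 𝔽 → ℝ} (hf : ∀ x, f x = 1 ∨ f x = -1) (g : 𝔽)
    (T : Finset (Fin n)) :
    ∑ U ∈ subcube Tᶜ, walsh f (g + U) ∈ AddSubgroup.zmultiples ((2 : ℝ) ^ (#T - 1))⁻¹ := by
  obtain ⟨k, hk⟩ := exists_sum_eq_two_mul_add_card (subcube T) (e := fun z => sgn g z * f z)
    fun z _ => by
      rcases sgn_eq_one_or_neg_one g z with h | h <;> rcases hf z with h' | h' <;> simp [h, h']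
  rw [sum_walsh_add_subcube, hk, card_subcube]
  generalize #T = t
  cases t with
  | zero => exact AddSubgroup.mem_zmultiples_iff.mpr ⟨2 * k + 1, by simp⟩
  | succ s =>
    refine AddSubgroup.mem_zmultiples_iff.mpr ⟨k + 2 ^ s, ?_⟩
    rw [zsmul_eq_mul, pow_succ]
    push_cast
    field_simp
    ring

theorem walsh_mem_zmultiples {f : 𝔽 → ℝ} {m : ℕ} (hf : ∀ x, f x = 1 ∨ f x = -1)
    (hdeg : ∀ g, m < wt g → walsh f g = 0) (g : 𝔽) :
    walsh f g ∈ AddSubgroup.zmultiples ((2 : ℝ) ^ (m - 1))⁻¹ := by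
  by_cases hg : m < wt g
  · rw [hdeg g hg]
    exact zero_mem _
  have hsum := sum_walsh_add_subcube_mem hf g (supp g)
  rw [← add_sum_erase _ _ (zero_mem_subcube _), add_zero] at hsum
  replace hsum := AddSubgroup.zmultiples_le.mpr
    (inv_two_pow_mem_zmultiples (Nat.sub_le_sub_right (not_lt.mp hg) 1)) hsum
  have hrest : ∑ U ∈ (subcube (supp g)ᶜ).erase 0, walsh f (g + U)
      ∈ AddSubgroup.zmultiples ((2 : ℝ) ^ (m - 1))⁻¹ :=
    sum_mem fun U hU => walsh_mem_zmultiples hf hdeg (g + U)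
  simpa using sub_mem hsum hrest
termination_by n - wt g
decreasing_by
  have := wt_lt_wt_add (mem_of_mem_erase hU) (ne_of_mem_erase hU)
  have := wt_le (g + U)
  omega

lemma sum_walsh_sq_eq_one {f : 𝔽 → ℝ} (hf : ∀ x, f x = 1 ∨ f x = -1) :
    ∑ g, walsh f g ^ 2 = 1 := by
  have hsq (x : 𝔽) : f x ^ 2 = 1 := by rcases hf x with h | h <;> simp [h]
  simp [sum_walsh_sq, hsq]

open Classical in
noncomputable def walshSupport (f : 𝔽 → ℝ) : Finset 𝔽 := univ.filter (walsh f · ≠ 0)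

lemma mem_walshSupport {f : 𝔽 → ℝ} {g : 𝔽} : g ∈ walshSupport f ↔ walsh f g ≠ 0 := by
  simp [walshSupport]

theorem card_walshSupport_le {f : 𝔽 → ℝ} {m : ℕ} (hf : ∀ x, f x = 1 ∨ f x = -1)
    (hdeg : ∀ g, m < wt g → walsh f g = 0) : #(walshSupport f) ≤ 2 ^ (2 * m - 2) := by
  set c : ℝ := ((2 : ℝ) ^ (m - 1))⁻¹
  have hc : 0 ≤ c := by positivity
  have hlow (g) (hg : g ∈ walshSupport f) : c ^ 2 ≤ walsh f g ^ 2 := by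
    rw [← sq_abs (walsh f g)]
    exact pow_le_pow_left₀ hc
      (le_abs_of_mem_zmultiples hc (walsh_mem_zmultiples hf hdeg g) (mem_walshSupport.mp hg)) 2
  have hsum : #(walshSupport f) * c ^ 2 ≤ 1 := calc
    _ = ∑ g ∈ walshSupport f, c ^ 2 := by rw [sum_const, nsmul_eq_mul]
    _ ≤ ∑ g ∈ walshSupport f, walsh f g ^ 2 := sum_le_sum hlow
    _ ≤ ∑ g, walsh f g ^ 2 :=
      sum_le_sum_of_subset_of_nonneg (subset_univ _) fun _ _ _ => sq_nonneg _
    _ = 1 := sum_walsh_sq_eq_one hf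
  have hpow : (2 : ℝ) ^ (2 * m - 2) = (2 ^ (m - 1)) ^ 2 := by
    rw [← pow_mul]
    congr 1
    omega
  have : (#(walshSupport f) : ℝ) ≤ 2 ^ (2 * m - 2) := by
    rwa [hpow, ← div_le_one (by positivity), div_eq_mul_inv, ← inv_pow]
  exact_mod_cast this

noncomputable def nodes (f : 𝔽 → ℝ) : Finset (Fin n) := (walshSupport f).biUnion supp

lemma mem_nodes {f : 𝔽 → ℝ} {i : Fin n} : i ∈ nodes f ↔ ∃ g, walsh f g ≠ 0 ∧ g i = 1 := by
  simp [nodes, mem_walshSupport, mem_supp]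

def nodeBound (m : ℕ) : ℕ := m * 2 ^ (2 * m - 2)

lemma le_nodeBound (m : ℕ) : m ≤ nodeBound m := Nat.le_mul_of_pos_right m (by positivity)

theorem card_nodes_le {f : 𝔽 → ℝ} {m : ℕ} (hf : ∀ x, f x = 1 ∨ f x = -1)
    (hdeg : ∀ g, m < wt g → walsh f g = 0) : #(nodes f) ≤ nodeBound m := calc
  #(nodes f) ≤ ∑ g ∈ walshSupport f, #(supp g) := card_biUnion_le
  _ ≤ ∑ g ∈ walshSupport f, m :=
    sum_le_sum fun g hg => not_lt.mp fun h => mem_walshSupport.mp hg (hdeg g h)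
  _ ≤ nodeBound m := by
    rw [sum_const, smul_eq_mul, mul_comm, nodeBound]
    exact Nat.mul_le_mul_left m (card_walshSupport_le hf hdeg)

lemma walsh_one (g : 𝔽) : walsh 1 g = if g = 0 then 1 else 0 := by
  simp [walsh, sgn_comm g, sum_sgn]

lemma nodes_one : nodes (1 : 𝔽 → ℝ) = ∅ := by
  ext i
  simp [mem_nodes, walsh_one]

lemma nodes_mul_subset (f h : 𝔽 → ℝ) : nodes (f * h) ⊆ nodes f ∪ nodes h := by
  intro i hi
  obtain ⟨g, hg, hgi⟩ := mem_nodes.mp hi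
  rw [walsh_mul] at hg
  obtain ⟨k, -, hk⟩ := exists_ne_zero_of_sum_ne_zero hg
  obtain ⟨hk, hgk⟩ := mul_ne_zero_iff.mp hk
  have : (g + k) i + k i = 1 := by rwa [Pi.add_apply, add_assoc, ZModModule.add_self, add_zero]
  rcases ZMod.eq_one_or_eq_one_of_add_eq_one this with h | h
  · exact mem_union_left _ (mem_nodes.mpr ⟨g + k, hgk, h⟩)
  · exact mem_union_right _ (mem_nodes.mpr ⟨k, hk, h⟩)

lemma nodes_prod_subset {ι : Type*} (s : Finset ι) (f : ι → 𝔽 → ℝ) :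
    nodes (∏ i ∈ s, f i) ⊆ s.biUnion fun i => nodes (f i) := by
  classical
  induction s using Finset.induction_on with
  | empty => simp [nodes_one]
  | insert a s ha ih =>
    rw [prod_insert ha, biUnion_insert]
    exact (nodes_mul_subset _ _).trans (union_subset_union subset_rfl ih)

lemma card_le_of_walshSupport_subset {ι : Type*} [Fintype ι] {F : ι → 𝔽 → ℝ}
    (hF : LinearIndependent ℝ F) {Γ : Finset 𝔽} (hΓ : ∀ i, walshSupport (F i) ⊆ Γ) :
    Fintype.card ι ≤ #Γ := by
  classical
  have hspan (i : ι) : F i ∈ Submodule.span ℝ (Γ.image sgn : Set (𝔽 → ℝ)) := by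
    have : F i = ∑ g ∈ Γ, walsh (F i) g • sgn g := by
      funext x
      rw [← sum_walsh_mul_sgn (F i) x, ← sum_subset (subset_univ Γ) fun g _ hg => ?_]
      · simp
      · rw [not_imp_comm.mp (fun h => hΓ i (mem_walshSupport.mpr h)) hg, zero_mul]
    rw [this]
    exact Submodule.sum_mem _ fun g hg =>
      Submodule.smul_mem _ _ (Submodule.subset_span (mem_image_of_mem _ hg))
  have := linearIndependent_le_span' F hF _ (Set.range_subset_iff.mpr hspan)
  simp only [Cardinal.mk_fintype, Finset.coe_sort_coe, Fintype.card_coe, Nat.cast_le] at this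
  exact this.trans card_image_le

lemma card_supp_subset_wt_le (N : Finset (Fin n)) (m : ℕ) :
    #{g : 𝔽 | supp g ⊆ N ∧ wt g ≤ m} ≤ (#N + 1) ^ m := calc
  _ ≤ #((range (m + 1)).biUnion fun k => N.powersetCard k) := by
    refine card_le_card_of_injOn supp (fun g hg => ?_) supp_injective.injOn
    simp only [coe_filter, mem_univ, true_and, Set.mem_ofPred_eq] at hg
    simp only [coe_biUnion, coe_range, Set.mem_Iio, Set.mem_iUnion, mem_coe, mem_powersetCard]
    exact ⟨wt g, by omega, hg.1, rfl⟩
  _ ≤ ∑ k ∈ range (m + 1), #(N.powersetCard k) := card_biUnion_le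
  _ ≤ (#N + 1) ^ m := by simpa only [card_powersetCard] using Nat.sum_choose_le_succ_pow #N m

noncomputable def sgnChar (v : 𝔽) : AddChar 𝔽 ℝ where
  toFun u := sgn u v
  map_zero_eq_one' := sgn_zero_left v
  map_add_eq_mul' u u' := sgn_add_left u u' v

lemma sgnChar_injective : Function.Injective (sgnChar : 𝔽 → AddChar 𝔽 ℝ) := by
  intro v w h
  have hvw (u : 𝔽) : sgn u (v + w) = 1 := by
    rw [sgn_add_right, show sgn u w = sgn u v from (DFunLike.congr_fun h u).symm, sgn_mul_self]
  have hsum := sum_sgn (v + w)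
  simp only [hvw, sum_const, card_univ, Fintype.card_pi, ZMod.card, prod_const, Fintype.card_fin,
    nsmul_eq_mul, mul_one, Nat.cast_pow, Nat.cast_ofNat] at hsum
  split_ifs at hsum with h0
  · rwa [← ZModModule.sub_eq_add, sub_eq_zero] at h0
  · exact absurd hsum (by positivity)

noncomputable def component (π : Equiv.Perm 𝔽) : AddChar 𝔽 (𝔽 → ℝ) where
  toFun J x := sgn (π x) J
  map_zero_eq_one' := funext fun x => sgn_zero_right (π x)
  map_add_eq_mul' J J' := funext fun x => sgn_add_right (π x) J J'

lemma fc_eq_walsh_component (π : Equiv.Perm 𝔽) (J : 𝔽) : fc π J = walsh (component π J) := rfl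

lemma component_apply_eq_one_or_neg_one (π : Equiv.Perm 𝔽) (J x : 𝔽) :
    component π J x = 1 ∨ component π J x = -1 :=
  sgn_eq_one_or_neg_one (π x) J

lemma linearIndependent_component (π : Equiv.Perm 𝔽) : LinearIndependent ℝ (component π) :=
  ((AddChar.linearIndependent 𝔽 ℝ).comp _ sgnChar_injective).map' (LinearMap.funLeft ℝ ℝ π)
    (LinearMap.ker_eq_bot.mpr (LinearMap.funLeft_injective_of_surjective _ _ _ π.surjective))

lemma nodes_component_sum_subset (π : Equiv.Perm 𝔽) {r : ℕ} (b : Fin r → 𝔽) (c : Fin r → ZMod 2) :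
    nodes (component π (∑ k, c k • b k)) ⊆ univ.biUnion fun k => nodes (component π (b k)) := by
  rw [AddChar.map_sum_eq_prod]
  refine (nodes_prod_subset _ _).trans (biUnion_mono fun k _ => ?_)
  rcases ZMod.eq_zero_or_eq_one (c k) with h | h <;> simp [h, nodes_one]

lemma nodeBound_sq_succ_pow_lt (m : ℕ) :
    ((nodeBound m ^ 2 + 1) * nodeBound m + 1) ^ m < 2 ^ (nodeBound m ^ 2 + 1) := by
  rcases Nat.lt_or_ge m 2 with hm | hm
  · interval_cases m <;> norm_num [nodeBound]
  set D := nodeBound m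
  have h4 : 4 ≤ 2 ^ (2 * m - 2) :=
    (Nat.pow_le_pow_right (by norm_num) (by omega : 2 ≤ 2 * m - 2)).trans' (by norm_num)
  have hD : 4 * m ≤ D := by rw [mul_comm]; exact Nat.mul_le_mul_left m h4
  have hDpow : D ≤ 2 ^ (3 * m - 3) := calc
    D ≤ 2 ^ (m - 1) * 2 ^ (2 * m - 2) :=
      Nat.mul_le_mul_right _ (by have := (m - 1).lt_two_pow_self; omega)
    _ = 2 ^ (3 * m - 3) := by rw [← pow_add]; congr 1; omega
  have hbase : (D ^ 2 + 1) * D + 1 ≤ 2 ^ (9 * m - 8) := calc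
    _ ≤ 2 * D ^ 3 := by nlinarith
    _ ≤ 2 * (2 ^ (3 * m - 3)) ^ 3 := by gcongr
    _ = 2 ^ (9 * m - 8) := by rw [← pow_mul, ← pow_succ']; congr 1; omega
  have hexp : (9 * m - 8) * m < D ^ 2 + 1 := by
    have : (9 * m - 8) * m ≤ 9 * m * m := Nat.mul_le_mul_right _ (Nat.sub_le _ _)
    nlinarith
  calc ((D ^ 2 + 1) * D + 1) ^ m ≤ (2 ^ (9 * m - 8)) ^ m := Nat.pow_le_pow_left hbase m
    _ = 2 ^ ((9 * m - 8) * m) := (pow_mul _ _ _).symm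
    _ < 2 ^ (D ^ 2 + 1) := Nat.pow_lt_pow_right (by norm_num) hexp

lemma mul_nodeBound_add_one_pow_lt {m r : ℕ} (hr : nodeBound m ^ 2 < r) :
    (r * nodeBound m + 1) ^ m < 2 ^ r := by
  induction r, hr using Nat.le_induction with
  | base => exact nodeBound_sq_succ_pow_lt m
  | succ r hr ih =>
    have : 2 * m ≤ r := by nlinarith [le_nodeBound m]
    calc ((r + 1) * nodeBound m + 1) ^ m ≤ 2 * (r * nodeBound m + 1) ^ m :=
          Nat.succ_mul_add_one_pow_le _ this
      _ < 2 * 2 ^ r := by omega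
      _ = 2 ^ (r + 1) := (pow_succ' _ _).symm

lemma le_nodeBound_sq_of_two_pow_le {m r : ℕ} (h : 2 ^ r ≤ (r * nodeBound m + 1) ^ m) :
    r ≤ nodeBound m ^ 2 := by
  by_contra! hr
  exact (mul_nodeBound_add_one_pow_lt hr).not_ge h

open Classical in
noncomputable def subgroupNodes (π : Equiv.Perm 𝔽) (S : AddSubgroup 𝔽) : Finset (Fin n) :=
  univ.filter fun i => ∃ J ∈ S, i ∈ nodes (component π J)

lemma mem_subgroupNodes {π : Equiv.Perm 𝔽} {S : AddSubgroup 𝔽} {i : Fin n} :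
    i ∈ subgroupNodes π S ↔ ∃ J ∈ S, i ∈ nodes (component π J) := by
  simp [subgroupNodes]

lemma card_subgroupNodes_le {π : Equiv.Perm 𝔽} {S : AddSubgroup 𝔽} {m : ℕ}
    (hdeg : ∀ J ∈ S, ∀ g, m < wt g → walsh (component π J) g = 0)
    {r : ℕ} {b : Fin r → 𝔽} (hbS : ∀ k, b k ∈ S)
    (hspan : ∀ J ∈ S, ∃ c : Fin r → ZMod 2, ∑ k, c k • b k = J) :
    #(subgroupNodes π S) ≤ r * nodeBound m := calc
  _ ≤ #(univ.biUnion fun k => nodes (component π (b k))) := card_le_card fun i hi => by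
      obtain ⟨J, hJ, hiJ⟩ := mem_subgroupNodes.mp hi
      obtain ⟨c, rfl⟩ := hspan J hJ
      exact nodes_component_sum_subset π b c hiJ
  _ ≤ ∑ k, #(nodes (component π (b k))) := card_biUnion_le
  _ ≤ ∑ k : Fin r, nodeBound m :=
    sum_le_sum fun k _ => card_nodes_le (component_apply_eq_one_or_neg_one π _) (hdeg _ (hbS k))
  _ = r * nodeBound m := by simp

lemma card_le_succ_card_subgroupNodes_pow {π : Equiv.Perm 𝔽} {S : AddSubgroup 𝔽} {m : ℕ}
    (hdeg : ∀ J ∈ S, ∀ g, m < wt g → walsh (component π J) g = 0) :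
    Nat.card S ≤ (#(subgroupNodes π S) + 1) ^ m := by
  classical
  rw [Nat.card_eq_fintype_card]
  refine (card_le_of_walshSupport_subset ((linearIndependent_component π).comp _
    Subtype.val_injective) fun J g hg => ?_).trans (card_supp_subset_wt_le _ m)
  replace hg := mem_walshSupport.mp hg
  simp only [mem_filter, mem_univ, true_and]
  refine ⟨fun i hi => ?_, not_lt.mp fun h => hg (hdeg J J.2 g h)⟩
  exact mem_subgroupNodes.mpr ⟨J, J.2, mem_nodes.mpr ⟨g, hg, mem_supp.mp hi⟩⟩

end SubgroupNodes

open SubgroupNodes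

open Classical in
theorem subgroup_nodes_bound_general {n : ℕ} (π : Equiv.Perm (Fin n → ZMod 2))
    (m : ℕ) (S : AddSubgroup (Fin n → ZMod 2))
    (hloc : ∀ J ∈ S, ∀ I : Fin n → ZMod 2, m < wt I → fc π J I = 0) :
    (Finset.univ.filter (fun i : Fin n =>
        ∃ J ∈ S, ∃ g : Fin n → ZMod 2, fc π J g ≠ 0 ∧ g i = 1)).card
      ≤ (m * 2 ^ (2 * m - 2)) ^ 3 := by
  have hdeg : ∀ J ∈ S, ∀ g, m < wt g → walsh (component π J) g = 0 := by
    simpa only [fc_eq_walsh_component] using hloc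
  have hnodes : univ.filter (fun i : Fin n => ∃ J ∈ S, ∃ g, fc π J g ≠ 0 ∧ g i = 1)
      = subgroupNodes π S := by
    ext i
    rw [mem_filter, mem_subgroupNodes]
    simp only [mem_univ, true_and, mem_nodes, fc_eq_walsh_component]
  obtain ⟨r, b, hcard, hbS, hspan⟩ := AddSubgroup.exists_card_eq_two_pow_of_zmod_two S
  have hN := card_subgroupNodes_le hdeg hbS hspan
  have hr : r ≤ nodeBound m ^ 2 := le_nodeBound_sq_of_two_pow_le <|
    (hcard ▸ card_le_succ_card_subgroupNodes_pow hdeg).trans (Nat.pow_le_pow_left (by omega) m)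
  rw [hnodes]
  calc #(subgroupNodes π S) ≤ r * nodeBound m := hN
    _ ≤ nodeBound m ^ 2 * nodeBound m := Nat.mul_le_mul_right _ hr
    _ = (m * 2 ^ (2 * m - 2)) ^ 3 := by rw [nodeBound]; ring

open Classical in
/-- If every element of a subgroup S of V has all its Fourier coefficients localized
to weight ≤ m, then the total number of nodes used by S is at most (m·2^(2m-2))³
(bound D_m). -/
theorem subgroup_nodes_bound {n : ℕ} (hn : 1 ≤ n) (π : Equiv.Perm (Fin n → ZMod 2))
    (m : ℕ) (hm : 1 ≤ m) (S : AddSubgroup (Fin n → ZMod 2))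
    (hloc : ∀ J ∈ S, ∀ I : Fin n → ZMod 2, m < wt I → fc π J I = 0) :
    (Finset.univ.filter (fun i : Fin n =>
        ∃ J ∈ S, ∃ g : Fin n → ZMod 2, fc π J g ≠ 0 ∧ g i = 1)).card
      ≤ (m * 2 ^ (2 * m - 2)) ^ 3 :=
  subgroup_nodes_bound_general π m S hloc
end
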